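/- arXiv:2409.08862 — 4 statements merged into one kernel-verified Lean document; each statement's English description precedes it below -/
import Mathlib

section
/- If δ_0 > 0 and δ_{i+1} = δ_i/(1+δ_i)^2, then for all i ≥ 1 one has δ_i < 1/(2i), and there exists a constant c > 0 (one may take c = 2(1/δ_0 + δ_0 + 1)) such that δ_i > 1/(2i) − (c + log i)/(8 i²) for all i ≥ 1. -/
/-!
Taking reciprocals linearises the recursion: `1/δ_{i+1} = 1/δ_i + 2 + δ_i`, hence
`1/δ_i = 1/δ_0 + 2i + ∑_{k<i} δ_k`. Dropping the sum gives `δ_i < 1/(2i)`. Feeding this back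
into the sum bounds it by `δ_0 + (1 + log i)/2` through the harmonic numbers, so
`1/δ_i < 2i + (c + log i)/2`, and the tangent line of `x ↦ 1/x` at `2i` turns this into the
lower bound on `δ_i`.
-/

open Finset Real

theorem one_div_sub_div_sq_lt_one_div_add {a s : ℝ} (ha : 0 < a) (has : 0 < a + s) (hs : s ≠ 0) :
    1 / a - s / a ^ 2 < 1 / (a + s) := by
  rw [lt_div_iff₀ has]
  have key : (1 / a - s / a ^ 2) * (a + s) = 1 - (s / a) ^ 2 := by field_simp; ring
  have : 0 < (s / a) ^ 2 := by positivity
  linarith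

theorem inv_div_one_add_sq {x : ℝ} (hx : x ≠ 0) : (x / (1 + x) ^ 2)⁻¹ = x⁻¹ + 2 + x := by
  rw [inv_div]; field_simp; ring

section Recursion

variable {d : ℕ → ℝ}

theorem pos_of_div_one_add_sq (h0 : 0 < d 0) (hrec : ∀ i, d (i + 1) = d i / (1 + d i) ^ 2)
    (i : ℕ) : 0 < d i := by
  induction i with
  | zero => exact h0
  | succ n ih => rw [hrec]; positivity

theorem inv_eq_inv_zero_add_sum (hpos : ∀ i, 0 < d i)
    (hrec : ∀ i, d (i + 1) = d i / (1 + d i) ^ 2) (i : ℕ) :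
    (d i)⁻¹ = (d 0)⁻¹ + 2 * i + ∑ k ∈ range i, d k := by
  induction i with
  | zero => simp
  | succ n ih =>
    rw [hrec, inv_div_one_add_sq (hpos n).ne', ih, sum_range_succ]
    push_cast
    ring

theorem lt_one_div_two_mul (hpos : ∀ i, 0 < d i)
    (hrec : ∀ i, d (i + 1) = d i / (1 + d i) ^ 2) {i : ℕ} (hi : 0 < i) :
    d i < 1 / (2 * i) := by
  have h2i : (0 : ℝ) < 2 * i := by positivity
  have hsum : 0 ≤ ∑ k ∈ range i, d k := sum_nonneg fun k _ => (hpos k).le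
  have hinv : 2 * (i : ℝ) < (d i)⁻¹ := by
    rw [inv_eq_inv_zero_add_sum hpos hrec]
    linarith [inv_pos.2 (hpos 0)]
  rw [← inv_inv (d i), one_div]
  exact inv_strictAnti₀ h2i hinv

theorem sum_range_le_add_log (hpos : ∀ i, 0 < d i)
    (hrec : ∀ i, d (i + 1) = d i / (1 + d i) ^ 2) (i : ℕ) :
    ∑ k ∈ range i, d k ≤ d 0 + (1 + log i) / 2 := by
  have hterm : ∀ k ∈ range i, d (k + 1) ≤ (1 / 2) * (1 / ((k : ℝ) + 1)) := fun k _ => by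
    have := lt_one_div_two_mul hpos hrec k.succ_pos
    rw [one_div_mul_one_div]
    push_cast at this
    exact this.le
  have hharmonic : ∑ k ∈ range i, (1 : ℝ) / ((k : ℝ) + 1) = harmonic i := by
    simp [harmonic]
  calc ∑ k ∈ range i, d k
      ≤ ∑ k ∈ range (i + 1), d k := by
        rw [sum_range_succ]; linarith [hpos i]
    _ = d 0 + ∑ k ∈ range i, d (k + 1) := by rw [sum_range_succ']; ring
    _ ≤ d 0 + (1 / 2) * harmonic i := by
        rw [← hharmonic, mul_sum]; gcongr with k hk; exact hterm k hk
    _ ≤ d 0 + (1 + log i) / 2 := by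
        have := harmonic_le_one_add_log i
        linarith

theorem inv_lt_two_mul_add_log (hpos : ∀ i, 0 < d i)
    (hrec : ∀ i, d (i + 1) = d i / (1 + d i) ^ 2) (i : ℕ) :
    (d i)⁻¹ < 2 * i + (2 * ((d 0)⁻¹ + d 0 + 1) + log i) / 2 := by
  rw [inv_eq_inv_zero_add_sum hpos hrec]
  linarith [sum_range_le_add_log hpos hrec i]

end Recursion

theorem stmt4 (d : ℕ → ℝ) (h0 : 0 < d 0)
    (hrec : ∀ i, d (i+1) = d i / (1 + d i)^2) :
    (∀ i : ℕ, 1 ≤ i → d i < 1 / (2 * i)) ∧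
    ∃ c : ℝ, 0 < c ∧ c = 2 * (1 / d 0 + d 0 + 1) ∧
      ∀ i : ℕ, 1 ≤ i →
        1 / (2 * i) - (c + Real.log i) / (8 * (i : ℝ)^2) < d i := by
  have hpos := pos_of_div_one_add_sq h0 hrec
  refine ⟨fun i hi => lt_one_div_two_mul hpos hrec hi, _, by positivity, rfl, fun i hi => ?_⟩
  set t := 2 * (1 / d 0 + d 0 + 1) + log i
  have h2i : (0 : ℝ) < 2 * i := by positivity
  have ht : 0 < t / 2 := by have := log_natCast_nonneg i; positivity
  calc 1 / (2 * i) - t / (8 * (i : ℝ) ^ 2)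
      = 1 / (2 * i) - t / 2 / (2 * i) ^ 2 := by ring
    _ < 1 / (2 * i + t / 2) := one_div_sub_div_sq_lt_one_div_add h2i (by positivity) ht.ne'
    _ < d i := by
        rw [← inv_inv (d i), one_div]
        refine inv_strictAnti₀ (inv_pos.2 (hpos i)) ?_
        simpa only [t, one_div] using inv_lt_two_mul_add_log hpos hrec i
end

section
/- Let H be an n×d real matrix, Σ an n×n symmetric positive definite matrix, and Γ a d×d symmetric positive semidefinite matrix. If (δ, w) satisfies the generalized eigenvalue equation H Γ Hᵀ w = δ Σ w with δ ≥ 0, then defining Γ' via the deterministic EKI covariance update in observation space, i.e., H Γ' Hᵀ = M (H Γ Hᵀ) Mᵀ with M = Σ (H Γ Hᵀ + Σ)⁻¹, one has H Γ' Hᵀ w = (δ/(1+δ)²) Σ w. That is, the generalized eigenvectors are invariant and the eigenvalues evolve by δ ↦ δ/(1+δ)². -/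
open Matrix

theorem stmt8 {n d : ℕ} (H : Matrix (Fin n) (Fin d) ℝ)
    (S : Matrix (Fin n) (Fin n) ℝ) (hS : S.PosDef)
    (Γ Γ' : Matrix (Fin d) (Fin d) ℝ) (hΓ : Γ.PosSemidef)
    (δ : ℝ) (hδ : 0 ≤ δ) (w : Fin n → ℝ)
    (heig : (H * Γ * Hᵀ) *ᵥ w = δ • (S *ᵥ w))
    (M : Matrix (Fin n) (Fin n) ℝ) (hM : M = S * (H * Γ * Hᵀ + S)⁻¹)
    (hupd : H * Γ' * Hᵀ = M * (H * Γ * Hᵀ) * Mᵀ) :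
    (H * Γ' * Hᵀ) *ᵥ w = (δ / (1 + δ)^2) • (S *ᵥ w) := by
  set A := H * Γ * Hᵀ with hA
  have hAps : A.PosSemidef := by
    have := hΓ.mul_mul_conjTranspose_same H
    rwa [Matrix.conjTranspose_eq_transpose_of_trivial, ← hA] at this
  have hB : (A + S).PosDef := Matrix.PosDef.posSemidef_add hAps hS
  have hBinv : IsUnit (A + S).det := hB.det_pos.ne'.isUnit
  have hAsymm : Aᵀ = A := by
    have := hAps.isHermitian
    rwa [Matrix.IsHermitian, Matrix.conjTranspose_eq_transpose_of_trivial] at this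
  have hSsymm : Sᵀ = S := by
    have := hS.isHermitian
    rwa [Matrix.IsHermitian, Matrix.conjTranspose_eq_transpose_of_trivial] at this
  have hBsymm : (A + S)ᵀ = A + S := by
    rw [Matrix.transpose_add, hAsymm, hSsymm]
  have h1δ : (1 + δ) ≠ 0 := by positivity
  have hBw : (A + S) *ᵥ w = (1 + δ) • (S *ᵥ w) := by
    rw [Matrix.add_mulVec, heig, ← one_smul ℝ (S *ᵥ w), smul_smul, ← add_smul, one_smul,
      mul_one]
    ring_nf
  have hkey : (A + S)⁻¹ *ᵥ (S *ᵥ w) = (1 + δ)⁻¹ • w := by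
    have h2 : w = (1 + δ) • ((A + S)⁻¹ *ᵥ (S *ᵥ w)) := by
      have := congrArg (fun v => (A + S)⁻¹ *ᵥ v) hBw
      simp only [Matrix.mulVec_smul, Matrix.mulVec_mulVec,
        Matrix.nonsing_inv_mul _ hBinv, Matrix.one_mulVec] at this
      simpa [Matrix.mulVec_mulVec] using this
    calc (A + S)⁻¹ *ᵥ (S *ᵥ w)
        = (1 + δ)⁻¹ • ((1 + δ) • ((A + S)⁻¹ *ᵥ (S *ᵥ w))) := by
          rw [smul_smul, inv_mul_cancel₀ h1δ, one_smul]
      _ = (1 + δ)⁻¹ • w := by rw [← h2]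
  have hMT : Mᵀ = (A + S)⁻¹ * S := by
    rw [hM, Matrix.transpose_mul, Matrix.transpose_nonsing_inv, hSsymm, hBsymm]
  have e1 : Mᵀ *ᵥ w = (1 + δ)⁻¹ • w := by
    rw [hMT, ← Matrix.mulVec_mulVec, hkey]
  have e3 : M *ᵥ (S *ᵥ w) = (1 + δ)⁻¹ • (S *ᵥ w) := by
    rw [hM, ← Matrix.mulVec_mulVec, hkey, Matrix.mulVec_smul]
  have estep : (M * A * Mᵀ) *ᵥ w = M *ᵥ (A *ᵥ (Mᵀ *ᵥ w)) := by
    rw [mul_assoc]; simp only [Matrix.mulVec_mulVec]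
  rw [hupd, estep, e1, Matrix.mulVec_smul, heig, Matrix.mulVec_smul, Matrix.mulVec_smul,
    e3, smul_smul, smul_smul]
  congr 1
  rw [div_eq_mul_inv, sq, mul_inv]
  ring
end

section
/- Let H ∈ ℝ^{n×d}, Σ ∈ ℝ^{n×n} symmetric positive definite, Γ ∈ ℝ^{d×d} symmetric positive semidefinite, K = Γ Hᵀ (H Γ Hᵀ + Σ)⁻¹. Then I + Γ Hᵀ Σ⁻¹ H is invertible and I − K H = (I + Γ Hᵀ Σ⁻¹ H)⁻¹. -/
/-!
By Sylvester's determinant identity, `det (1 + Γ Hᵀ S⁻¹ H) = det (1 + H Γ Hᵀ S⁻¹)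
= det (H Γ Hᵀ + S) / det S`, which is nonzero because `H Γ Hᵀ + S` is positive definite; the
inverse is then the Woodbury identity with `A = 1`, `C = S⁻¹`, `U = Γ Hᵀ`, `V = H`.
-/

open Matrix

namespace Matrix

variable {m n R : Type*} [Fintype m] [Fintype n]

lemma PosDef.mul_mul_transpose_add [CommRing R] [PartialOrder R] [StarRing R] [TrivialStar R]
    [StarOrderedRing R] {S : Matrix m m R} (hS : S.PosDef) {Γ : Matrix n n R}
    (hΓ : Γ.PosSemidef) (H : Matrix m n R) : (H * Γ * Hᵀ + S).PosDef := by
  simpa only [conjTranspose_eq_transpose_of_trivial] using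
    hS.posSemidef_add (hΓ.mul_mul_conjTranspose_same H)

variable [DecidableEq m] [DecidableEq n] [CommRing R]

lemma isUnit_one_add_mul_inv_mul {S : Matrix m m R} (hS : IsUnit S) (U : Matrix n m R)
    (V : Matrix m n R) (h : IsUnit (V * U + S)) : IsUnit (1 + U * S⁻¹ * V) := by
  rw [isUnit_iff_isUnit_det] at hS h ⊢
  have hSV : 1 + V * (U * S⁻¹) = (V * U + S) * S⁻¹ := by
    rw [Matrix.add_mul, mul_nonsing_inv S hS, Matrix.mul_assoc, add_comm]
  rw [det_one_add_mul_comm, hSV, det_mul]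
  exact h.mul (isUnit_nonsing_inv_det S hS)

lemma inv_one_add_mul_inv_mul {S : Matrix m m R} (hS : IsUnit S) (U : Matrix n m R)
    (V : Matrix m n R) (h : IsUnit (V * U + S)) :
    (1 + U * S⁻¹ * V)⁻¹ = 1 - U * (V * U + S)⁻¹ * V := by
  have hS' : IsUnit S⁻¹ := isUnit_nonsing_inv_iff.mpr hS
  rw [add_mul_mul_inv_eq_sub 1 U S⁻¹ V isUnit_one hS'] <;>
    simp only [inv_one, Matrix.one_mul, Matrix.mul_one,
      nonsing_inv_nonsing_inv S ((isUnit_iff_isUnit_det S).mp hS), add_comm S, h]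

end Matrix

theorem stmt13 {n d : ℕ} (H : Matrix (Fin n) (Fin d) ℝ)
    (S : Matrix (Fin n) (Fin n) ℝ) (hS : S.PosDef)
    (Γ : Matrix (Fin d) (Fin d) ℝ) (hΓ : Γ.PosSemidef)
    (K : Matrix (Fin d) (Fin n) ℝ)
    (hK : K = Γ * Hᵀ * (H * Γ * Hᵀ + S)⁻¹) :
    IsUnit (1 + Γ * Hᵀ * S⁻¹ * H) ∧
    1 - K * H = (1 + Γ * Hᵀ * S⁻¹ * H)⁻¹ := by
  have hA : IsUnit (H * (Γ * Hᵀ) + S) := by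
    simpa only [Matrix.mul_assoc] using (hS.mul_mul_transpose_add hΓ H).isUnit
  refine ⟨isUnit_one_add_mul_inv_mul hS.isUnit _ _ hA, ?_⟩
  rw [inv_one_add_mul_inv_mul hS.isUnit _ _ hA, hK, Matrix.mul_assoc H]
end

section
/- (Subspace property of EKI) Let V_i ∈ ℝ^{d×J} be the matrix of EKI particles at iteration i, updated by V_{i+1} = V_i + Γ_i Hᵀ (H Γ_i Hᵀ + Σ)⁻¹ (Y_i − H V_i) where Γ_i = (1/(J−1)) V_i (I − Π) V_iᵀ with Π = (1/J) e eᵀ and Y_i arbitrary in ℝ^{n×J}. Then Ran(Γ_{i+1}) ⊆ Ran(Γ_i) and Ran(V_{i+1}) ⊆ Ran(V_i); in particular Ran(V_i) ⊆ Ran(V_0) for all i. -/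
open Matrix

private lemma range_mul_le' {m p q : ℕ} (A : Matrix (Fin m) (Fin p) ℝ)
    (B : Matrix (Fin p) (Fin q) ℝ) :
    LinearMap.range (A * B).mulVecLin ≤ LinearMap.range A.mulVecLin := by
  rw [Matrix.mulVecLin_mul]
  exact LinearMap.range_comp_le_range _ _

private lemma range_smul_eq' {m p : ℕ} {c : ℝ} (hc : c ≠ 0)
    (A : Matrix (Fin m) (Fin p) ℝ) :
    LinearMap.range (c • A).mulVecLin = LinearMap.range A.mulVecLin := by
  have h : (c • A).mulVecLin = c • A.mulVecLin := by
    ext x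
    simp [Matrix.mulVecLin, Matrix.smul_mulVec]
  rw [h]
  exact LinearMap.range_smul A.mulVecLin c hc

private lemma range_mul_transpose' {m p : ℕ} (A : Matrix (Fin m) (Fin p) ℝ) :
    LinearMap.range (A * Aᵀ).mulVecLin = LinearMap.range A.mulVecLin := by
  apply Submodule.eq_of_le_of_finrank_eq (range_mul_le' A Aᵀ)
  exact Matrix.rank_self_mul_transpose A

private lemma range_add_le' {m p : ℕ} (A B : Matrix (Fin m) (Fin p) ℝ)
    (W : Submodule ℝ (Fin m → ℝ))
    (hA : LinearMap.range A.mulVecLin ≤ W)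
    (hB : LinearMap.range B.mulVecLin ≤ W) :
    LinearMap.range (A + B).mulVecLin ≤ W := by
  rintro y ⟨x, rfl⟩
  simp only [Matrix.mulVecLin_apply, Matrix.add_mulVec]
  exact W.add_mem (hA ⟨x, rfl⟩) (hB ⟨x, rfl⟩)

theorem stmt15 {n d J : ℕ} (hJ : 1 < J)
    (H : Matrix (Fin n) (Fin d) ℝ)
    (S : Matrix (Fin n) (Fin n) ℝ) (hS : S.PosDef)
    (V : ℕ → Matrix (Fin d) (Fin J) ℝ)
    (Y : ℕ → Matrix (Fin n) (Fin J) ℝ)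
    (Γ : ℕ → Matrix (Fin d) (Fin d) ℝ)
    (Pi : Matrix (Fin J) (Fin J) ℝ)
    (hPi : Pi = ((J : ℝ))⁻¹ • Matrix.of (fun _ _ => (1 : ℝ)))
    (hΓ : ∀ i, Γ i = ((J : ℝ) - 1)⁻¹ • (V i * (1 - Pi) * (V i)ᵀ))
    (hupd : ∀ i, V (i+1) =
      V i + Γ i * Hᵀ * (H * Γ i * Hᵀ + S)⁻¹ * (Y i - H * V i)) :
    (∀ i, LinearMap.range (Γ (i+1)).mulVecLin ≤ LinearMap.range (Γ i).mulVecLin) ∧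
    (∀ i, LinearMap.range (V (i+1)).mulVecLin ≤ LinearMap.range (V i).mulVecLin) ∧
    (∀ i, LinearMap.range (V i).mulVecLin ≤ LinearMap.range (V 0).mulVecLin) := by
  have hJ0 : (J : ℝ) ≠ 0 := by positivity
  have hc : ((J : ℝ) - 1)⁻¹ ≠ 0 := by
    have : (1 : ℝ) < (J : ℝ) := by exact_mod_cast hJ
    have : (J : ℝ) - 1 ≠ 0 := by linarith
    exact inv_ne_zero this
  set Q : Matrix (Fin J) (Fin J) ℝ := 1 - Pi with hQ
  have hPiT : Piᵀ = Pi := by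
    subst hPi; ext a b; simp
  have hPi2 : Pi * Pi = Pi := by
    subst hPi
    ext a b
    simp [Matrix.mul_apply, Finset.sum_const, Finset.card_univ]
    field_simp
  have hQT : Qᵀ = Q := by
    rw [hQ, Matrix.transpose_sub, Matrix.transpose_one, hPiT]
  have hQ2 : Q * Q = Q := by
    rw [hQ]
    simp [Matrix.sub_mul, Matrix.mul_sub, hPi2]
  -- key factorization : V i * Q * (V i)ᵀ = (V i * Q) * (V i * Q)ᵀ
  have hfact : ∀ A : Matrix (Fin d) (Fin J) ℝ,
      A * Q * Aᵀ = (A * Q) * (A * Q)ᵀ := by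
    intro A
    rw [Matrix.transpose_mul, hQT, ← Matrix.mul_assoc (A * Q) Q Aᵀ, Matrix.mul_assoc A Q Q, hQ2]
  have hΓrange : ∀ i, LinearMap.range (Γ i).mulVecLin
      = LinearMap.range (V i * Q).mulVecLin := by
    intro i
    rw [hΓ i, range_smul_eq' hc, hfact, range_mul_transpose']
  -- the update term is in the range of Γ i
  have hupd' : ∀ i, V (i+1) = V i +
      Γ i * (Hᵀ * (H * Γ i * Hᵀ + S)⁻¹ * (Y i - H * V i)) := by
    intro i
    rw [hupd i]
    simp only [Matrix.mul_assoc]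
  have hVstep : ∀ i, LinearMap.range (V (i+1)).mulVecLin
      ≤ LinearMap.range (V i).mulVecLin := by
    intro i
    rw [hupd' i]
    apply range_add_le'
    · exact le_rfl
    · exact le_trans (range_mul_le' _ _)
        (le_trans (le_of_eq (hΓrange i)) (range_mul_le' _ _))
  have hΓstep : ∀ i, LinearMap.range (Γ (i+1)).mulVecLin
      ≤ LinearMap.range (Γ i).mulVecLin := by
    intro i
    rw [hΓrange (i+1), hupd' i, Matrix.add_mul, Matrix.mul_assoc (Γ i)]
    apply range_add_le'
    · rw [hΓrange i]
    · exact range_mul_le' _ _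
  refine ⟨hΓstep, hVstep, ?_⟩
  intro i
  induction i with
  | zero => exact le_rfl
  | succ k ih => exact le_trans (hVstep k) ih
end
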